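/- Let k ≥ 0 and let G be a simple graph whose vertex set is the disjoint union of two sets V₁ and V₂, with x ∈ V₁ and y ∈ V₂, such that the only edge of G joining a vertex of V₁ to a vertex of V₂ is the edge xy. If the induced subgraphs G[V₁] and G[V₂] are both k-11-representable, then G is k-11-representable. (In other words, connecting two k-11-representable graphs by a single edge yields a k-11-representable graph.) -/

import Mathlib

/-- Number of occurrences of the consecutive pattern 11 in a word,
i.e. the number of positions `i` with `u i = u (i+1)`. -/
def pattern11Count {V : Type*} [DecidableEq V] (u : List V) : ℕ :=
  (u.zip u.tail).countP (fun p => decide (p.1 = p.2))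

/-- `w` is a `k`-11-representant of the simple graph `G`: every vertex occurs in `w`,
and two distinct vertices are adjacent iff the subword of `w` induced by them contains
at most `k` occurrences of the consecutive pattern 11. -/
def IsK11Rep {V : Type*} [DecidableEq V] (G : SimpleGraph V) (k : ℕ) (w : List V) : Prop :=
  (∀ v : V, v ∈ w) ∧
  ∀ x y : V, x ≠ y →
    (G.Adj x y ↔ pattern11Count (w.filter (fun a => decide (a = x ∨ a = y))) ≤ k)

/-- A simple graph is `k`-11-representable if it has a `k`-11-representant. -/
def K11Representable {V : Type*} [DecidableEq V] (G : SimpleGraph V) (k : ℕ) : Prop :=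
  ∃ w : List V, IsK11Rep G k w

/-- A graph is `t`-uniformly `k`-11-representable if it has a `k`-11-representant in which
every vertex occurs exactly `t` times. -/
def UniformK11Rep {V : Type*} [DecidableEq V] (G : SimpleGraph V) (t k : ℕ) : Prop :=
  ∃ w : List V, IsK11Rep G k w ∧ ∀ v : V, w.count v = t

/-- The final permutation `σ(w)`: distinct letters of `w` in order of last occurrence. -/
def finalPerm {V : Type*} [DecidableEq V] (w : List V) : List V := w.dedup

/-- The initial permutation `π(w)`: distinct letters of `w` in order of first occurrence. -/
def initPerm {V : Type*} [DecidableEq V] (w : List V) : List V := (w.reverse.dedup).reverse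

/-!
Take representants `u₁` of `G[V₁]` ending in `x` and `u₂` of `G[V₂]` starting with `y`: appending
to a word a prefix of its final permutation `σ` creates no new `11` in any two-letter subword, and
reversal turns representants into representants. Write `σ(u₁) = σ' x` and `π(u₂) = y π'`. Let `A`
be `u₁` with each `x` replaced by `x π(u₂)`, `B` be `u₂` with each `y` replaced by `σ(u₁) y`, and
`U = σ(u₁) σ' y x π' π(u₂)`. Then `A Uᵏ⁺¹ B` represents `G`:
* restricted to `a, b ∈ V₁` it is `u₁|_{a,b}` followed by copies of `σ(u₁)|_{a,b} = σ(u₁|_{a,b})`,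
  which add no `11`; the case `a, b ∈ V₂` is the mirror image under reversal;
* restricted to `x, y` it is `(xy)ⁿ`;
* for any other `a ∈ V₁`, `b ∈ V₂`, each copy of `U` contains `aa` (in `σ(u₁) σ'` if `a ≠ x`) or
  `bb` (in `π' π(u₂)` if `b ≠ y`), so there are more than `k` occurrences of `11`.
-/

namespace List

variable {α : Type*}

theorem mem_head?_of_mem_head?_flatten_replicate {q : List α} {n : ℕ} {b : α}
    (h : b ∈ (replicate n q).flatten.head?) : b ∈ q.head? := by
  cases n with
  | zero => simp at h
  | succ n => cases q with
    | nil => simp at h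
    | cons c q => simpa [replicate_succ] using h

theorem isChain_flatten_replicate {R : α → α → Prop} {q : List α} (hq : q.IsChain R)
    (hR : ∀ a ∈ q.getLast?, ∀ b ∈ q.head?, R a b) (n : ℕ) :
    (replicate n q).flatten.IsChain R := by
  induction n with
  | zero => simp
  | succ n ih =>
    rw [replicate_succ, flatten_cons, isChain_append]
    exact ⟨hq, ih, fun a ha b hb => hR a ha b (mem_head?_of_mem_head?_flatten_replicate hb)⟩

theorem flatten_replicate_append_self (q : List α) (n : ℕ) :
    (replicate n (q ++ q)).flatten = (replicate (2 * n) q).flatten := by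
  induction n with
  | zero => rfl
  | succ n ih => simp [Nat.mul_succ, replicate_succ, ih]

theorem Nodup.getLast?_ne_head? {l : List α} (hl : l.Nodup) {a b : α} (ha : a ∈ l) (hb : b ∈ l)
    (hab : a ≠ b) : ∀ c ∈ l.getLast?, ∀ d ∈ l.head?, c ≠ d := by
  rintro c hc d hd rfl
  rcases l with _ | ⟨e, _ | ⟨f, t⟩⟩
  · simp at hd
  · simp_all
  · rw [head?_cons, Option.mem_some_iff] at hd
    rw [getLast?_cons_cons, ← hd] at hc
    exact (nodup_cons.1 hl).1 (mem_of_getLast? hc)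

theorem filter_flatMap_eq_filter {l : List α} {f : α → List α} {p : α → Bool}
    (hf : ∀ c ∈ l, (f c).filter p = [c].filter p) : (l.flatMap f).filter p = l.filter p := by
  rw [filter_flatMap, flatMap_congr hf, ← filter_flatMap, flatMap_singleton']

theorem exists_filter_flatMap_eq_flatten_replicate {l : List α} {f : α → List α} {p : α → Bool}
    {q : List α} (hf : ∀ c ∈ l, (f c).filter p = [] ∨ (f c).filter p = q) :
    ∃ m, (l.flatMap f).filter p = (replicate m q).flatten := by
  induction l with
  | nil => exact ⟨0, rfl⟩
  | cons c l ih =>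
    obtain ⟨m, hm⟩ := ih fun d hd => hf d (mem_cons_of_mem c hd)
    rw [flatMap_cons, filter_append, hm]
    rcases hf c mem_cons_self with h | h
    · exact ⟨m, by rw [h, nil_append]⟩
    · exact ⟨m + 1, by rw [h, replicate_succ, flatten_cons]⟩

variable [DecidableEq α]

theorem dedup_filter (p : α → Bool) (l : List α) : (l.filter p).dedup = l.dedup.filter p := by
  induction l with
  | nil => rfl
  | cons a l ih =>
    by_cases hm : a ∈ l
    · by_cases hp : p a <;> simp [dedup_cons_of_mem hm, hp, hm, ih]
    · by_cases hp : p a <;> simp [dedup_cons_of_notMem hm, hp, hm, ih]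

theorem getLast?_dedup (l : List α) : l.dedup.getLast? = l.getLast? := by
  induction l with
  | nil => rfl
  | cons a l ih =>
    by_cases hm : a ∈ l
    · obtain ⟨c, hc⟩ := getLast?_isSome.2 (ne_nil_of_mem hm) |> Option.isSome_iff_exists.1
      simp [dedup_cons_of_mem hm, getLast?_cons, ih, hc]
    · simp [dedup_cons_of_notMem hm, getLast?_cons, ih]

end List

section Pattern11

variable {V : Type*} [DecidableEq V]

@[simp] theorem pattern11Count_nil : pattern11Count ([] : List V) = 0 := rfl

@[simp] theorem pattern11Count_singleton (a : V) : pattern11Count [a] = 0 := rfl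

theorem pattern11Count_cons_cons (a b : V) (l : List V) :
    pattern11Count (a :: b :: l) = (if a = b then 1 else 0) + pattern11Count (b :: l) := by
  simp only [pattern11Count, List.tail_cons, List.zip_cons_cons, List.countP_cons,
    decide_eq_true_eq]
  omega

@[simp] theorem pattern11Count_pair (a b : V) : pattern11Count [a, b] = if a = b then 1 else 0 := by
  simp [pattern11Count_cons_cons]

theorem pattern11Count_eq_zero_iff {u : List V} :
    pattern11Count u = 0 ↔ u.IsChain (· ≠ ·) := by
  induction u with
  | nil => simp
  | cons a l ih =>
    cases l with
    | nil => simp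
    | cons b l => by_cases hab : a = b <;> simp [pattern11Count_cons_cons, hab, ih]

theorem pattern11Count_append (s t : List V) :
    pattern11Count (s ++ t) =
      pattern11Count s + pattern11Count (s.getLast?.toList ++ t.head?.toList) +
        pattern11Count t := by
  induction s with
  | nil => cases t <;> simp
  | cons a s ih =>
    cases s with
    | nil => cases t <;> simp [pattern11Count_cons_cons]
    | cons b s =>
      rw [List.cons_append, List.cons_append, pattern11Count_cons_cons, ← List.cons_append, ih,
        pattern11Count_cons_cons, List.getLast?_cons_cons]
      omega

theorem pattern11Count_cons (a : V) (u : List V) :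
    pattern11Count (a :: u) = pattern11Count (a :: u.head?.toList) + pattern11Count u := by
  simpa using pattern11Count_append [a] u

theorem pattern11Count_append_of_ne {s t : List V}
    (h : ∀ c ∈ s.getLast?, ∀ d ∈ t.head?, c ≠ d) :
    pattern11Count (s ++ t) = pattern11Count s + pattern11Count t := by
  rw [pattern11Count_append]
  cases hs : s.getLast? <;> cases ht : t.head? <;> simp_all

theorem pattern11Count_add_le_append (s t : List V) :
    pattern11Count s + pattern11Count t ≤ pattern11Count (s ++ t) := by
  rw [pattern11Count_append]; omega

theorem pattern11Count_le_of_isInfix {s l : List V} (h : s <:+: l) :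
    pattern11Count s ≤ pattern11Count l := by
  obtain ⟨r, t, rfl⟩ := h
  have := pattern11Count_add_le_append r s
  have := pattern11Count_add_le_append (r ++ s) t
  omega

theorem pattern11Count_reverse (u : List V) : pattern11Count u.reverse = pattern11Count u := by
  induction u with
  | nil => rfl
  | cons a u ih =>
    rw [List.reverse_cons, pattern11Count_append, ih, List.getLast?_reverse,
      pattern11Count_cons a u]
    cases u.head? <;> simp [eq_comm, add_comm]

theorem pattern11Count_map {W : Type*} [DecidableEq W] {f : V → W} (hf : f.Injective)
    (u : List V) : pattern11Count (u.map f) = pattern11Count u := by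
  induction u with
  | nil => rfl
  | cons a l ih =>
    cases l with
    | nil => rfl
    | cons b l =>
      simp only [List.map_cons, pattern11Count_cons_cons, hf.eq_iff, ← ih]

theorem mul_le_pattern11Count_flatten_replicate (q : List V) (n : ℕ) :
    n * pattern11Count q ≤ pattern11Count (List.replicate n q).flatten := by
  induction n with
  | zero => simp
  | succ n ih =>
    rw [List.replicate_succ, List.flatten_cons, Nat.succ_mul]
    have := pattern11Count_add_le_append q (List.replicate n q).flatten
    omega

end Pattern11

section Words

variable {V : Type*} [DecidableEq V]

/-- `w.filter (pairPred a b)` is the induced subword `w|_{a,b}`. -/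
def pairPred (a b : V) (c : V) : Bool := decide (c = a ∨ c = b)

@[simp] theorem pairPred_left (a b : V) : pairPred a b a = true := by simp [pairPred]

@[simp] theorem pairPred_right (a b : V) : pairPred a b b = true := by simp [pairPred]

theorem pairPred_eq_false {a b c : V} (ha : c ≠ a) (hb : c ≠ b) : pairPred a b c = false := by
  simp [pairPred, ha, hb]

theorem pairPred_comm (a b : V) : pairPred a b = pairPred b a := by
  funext c; simp [pairPred, or_comm]

theorem filter_pairPred_map {W : Type*} [DecidableEq W] {f : V → W} (hf : f.Injective)
    (w : List V) (a b : V) :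
    (w.map f).filter (pairPred (f a) (f b)) = (w.filter (pairPred a b)).map f := by
  rw [List.filter_map]
  congr 2
  funext c
  simp [pairPred, hf.eq_iff]

theorem List.Nodup.filter_pairPred_eq_singleton {l : List V} (hl : l.Nodup) {a b : V}
    (ha : a ∈ l) (hb : b ∉ l) : l.filter (pairPred a b) = [a] := by
  have : l.filter (pairPred a b) = l.filter (· = a) :=
    List.filter_congr fun c hc => by simp [pairPred, show c ≠ b from fun h => hb (h ▸ hc)]
  rw [this, List.filter_eq, List.count_eq_one_of_mem hl ha, List.replicate_one]

theorem mem_finalPerm {u : List V} {c : V} : c ∈ finalPerm u ↔ c ∈ u := List.mem_dedup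

theorem mem_initPerm {u : List V} {c : V} : c ∈ initPerm u ↔ c ∈ u := by
  simp [initPerm]

theorem nodup_finalPerm (u : List V) : (finalPerm u).Nodup := List.nodup_dedup u

theorem nodup_initPerm (u : List V) : (initPerm u).Nodup :=
  List.nodup_reverse.2 (List.nodup_dedup _)

theorem getLast?_finalPerm (u : List V) : (finalPerm u).getLast? = u.getLast? :=
  List.getLast?_dedup u

theorem head?_initPerm (u : List V) : (initPerm u).head? = u.head? := by
  rw [initPerm, List.head?_reverse, List.getLast?_dedup, List.getLast?_reverse]

theorem finalPerm_filter (p : V → Bool) (u : List V) :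
    finalPerm (u.filter p) = (finalPerm u).filter p :=
  List.dedup_filter p u

theorem finalPerm_reverse (u : List V) : finalPerm u.reverse = (initPerm u).reverse := by
  simp [finalPerm, initPerm]

theorem initPerm_reverse (u : List V) : initPerm u.reverse = (finalPerm u).reverse := by
  simp [finalPerm, initPerm]

theorem pattern11Count_append_prefix_flatten_replicate_finalPerm {v z : List V} {a b : V}
    (ha : a ∈ v) (hb : b ∈ v) (hab : a ≠ b) {n : ℕ}
    (hz : z <+: (List.replicate n (finalPerm v)).flatten) :
    pattern11Count (v ++ z) = pattern11Count v := by
  have hσ := nodup_finalPerm v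
  have hends := hσ.getLast?_ne_head? (mem_finalPerm.2 ha) (mem_finalPerm.2 hb) hab
  have hchain : z.IsChain (· ≠ ·) :=
    (List.isChain_flatten_replicate (List.Pairwise.isChain hσ) hends n).infix hz.isInfix
  rw [pattern11Count_append_of_ne, pattern11Count_eq_zero_iff.2 hchain, add_zero]
  intro c hc d hd
  obtain ⟨t, ht⟩ := hz
  rw [← getLast?_finalPerm] at hc
  refine hends c hc d (List.mem_head?_of_mem_head?_flatten_replicate (n := n) ?_)
  rw [← ht, List.head?_append, Option.mem_def.1 hd]
  rfl

end Words

section Representants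

variable {V : Type*} [DecidableEq V] {G : SimpleGraph V} {k : ℕ} {w : List V}

theorem isK11Rep_iff : IsK11Rep G k w ↔ (∀ v, v ∈ w) ∧
    ∀ a b, a ≠ b → (G.Adj a b ↔ pattern11Count (w.filter (pairPred a b)) ≤ k) :=
  Iff.rfl

theorem IsK11Rep.adj_iff (h : IsK11Rep G k w) {a b : V} (hab : a ≠ b) :
    G.Adj a b ↔ pattern11Count (w.filter (pairPred a b)) ≤ k :=
  h.2 a b hab

theorem IsK11Rep.reverse (h : IsK11Rep G k w) : IsK11Rep G k w.reverse := by
  refine isK11Rep_iff.2 ⟨fun v => List.mem_reverse.2 (h.1 v), fun a b hab => ?_⟩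
  rw [h.adj_iff hab, List.filter_reverse, pattern11Count_reverse]

theorem IsK11Rep.exists_getLast?_eq (h : IsK11Rep G k w) (x : V) :
    ∃ w', IsK11Rep G k w' ∧ w'.getLast? = some x := by
  obtain ⟨P, T, hPT⟩ := List.append_of_mem (List.mem_dedup.2 (h.1 x))
  refine ⟨w ++ (P ++ [x]), isK11Rep_iff.2 ⟨fun v => List.mem_append_left _ (h.1 v),
    fun a b hab => ?_⟩, by simp⟩
  have hprefix : (P ++ [x]).filter (pairPred a b) <+:
      (List.replicate 1 (finalPerm (w.filter (pairPred a b)))).flatten := by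
    rw [List.replicate_one, List.flatten_singleton, finalPerm_filter, finalPerm, hPT,
      show P ++ x :: T = P ++ [x] ++ T by simp]
    exact (List.prefix_append (P ++ [x]) T).filter _
  rw [h.adj_iff hab, List.filter_append, pattern11Count_append_prefix_flatten_replicate_finalPerm
    (List.mem_filter.2 ⟨h.1 a, pairPred_left a b⟩) (List.mem_filter.2 ⟨h.1 b, pairPred_right a b⟩)
    hab hprefix]

theorem K11Representable.exists_getLast?_eq (h : K11Representable G k) (x : V) :
    ∃ w, IsK11Rep G k w ∧ w.getLast? = some x :=
  let ⟨_, hw⟩ := h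
  hw.exists_getLast?_eq x

theorem K11Representable.exists_head?_eq (h : K11Representable G k) (y : V) :
    ∃ w, IsK11Rep G k w ∧ w.head? = some y := by
  obtain ⟨w, hw⟩ := h
  obtain ⟨w', hw', hy⟩ := hw.reverse.exists_getLast?_eq y
  exact ⟨w'.reverse, hw'.reverse, by rw [List.head?_reverse, hy]⟩

end Representants

section Connect

variable {V : Type*} [DecidableEq V]

def middleBlock (u₁ u₂ : List V) (x y : V) : List V :=
  finalPerm u₁ ++ (finalPerm u₁).dropLast ++ [y, x] ++ (initPerm u₂).tail ++ initPerm u₂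

def connectWord (k : ℕ) (u₁ u₂ : List V) (x y : V) : List V :=
  u₁.flatMap (fun c => if c = x then x :: initPerm u₂ else [c]) ++
    (List.replicate (k + 1) (middleBlock u₁ u₂ x y)).flatten ++
    u₂.flatMap (fun c => if c = y then finalPerm u₁ ++ [y] else [c])

theorem middleBlock_reverse (u₁ u₂ : List V) (x y : V) :
    (middleBlock u₁ u₂ x y).reverse = middleBlock u₂.reverse u₁.reverse y x := by
  simp [middleBlock, finalPerm_reverse, initPerm_reverse, List.dropLast_reverse, List.tail_reverse]

theorem connectWord_reverse (k : ℕ) (u₁ u₂ : List V) (x y : V) :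
    (connectWord k u₁ u₂ x y).reverse = connectWord k u₂.reverse u₁.reverse y x := by
  simp [connectWord, middleBlock_reverse, finalPerm_reverse, initPerm_reverse, List.reverse_flatMap,
    List.reverse_flatten, Function.comp_def, apply_ite]

theorem filter_connectWord (k : ℕ) (u₁ u₂ : List V) (x y : V) (p : V → Bool) :
    (connectWord k u₁ u₂ x y).filter p =
      (u₁.flatMap fun c => if c = x then x :: initPerm u₂ else [c]).filter p ++
        (List.replicate (k + 1) ((middleBlock u₁ u₂ x y).filter p)).flatten ++
        (u₂.flatMap fun c => if c = y then finalPerm u₁ ++ [y] else [c]).filter p := by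
  rw [connectWord, List.filter_append, List.filter_append, List.filter_flatten, List.map_replicate]

variable {k : ℕ} {u₁ u₂ : List V} {x y a b : V}

theorem mem_connectWord {c : V} (hc : c ∈ u₁ ∨ c ∈ u₂) : c ∈ connectWord k u₁ u₂ x y := by
  simp only [connectWord, List.mem_append, List.mem_flatMap]
  rcases hc with hc | hc
  · exact Or.inl (Or.inl ⟨c, hc, by split_ifs with h <;> simp [h]⟩)
  · exact Or.inr ⟨c, hc, by split_ifs with h <;> simp [h]⟩

theorem pattern11Count_filter_connectWord_of_mem_left (hx : u₁.getLast? = some x) (hy : y ∈ u₂)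
    (hdisj : u₁.Disjoint u₂) (ha : a ∈ u₁) (hb : b ∈ u₁) (hab : a ≠ b) :
    pattern11Count ((connectWord k u₁ u₂ x y).filter (pairPred a b)) =
      pattern11Count (u₁.filter (pairPred a b)) := by
  have hu₂ : ∀ c ∈ u₂, pairPred a b c = false := fun c hc =>
    pairPred_eq_false (fun h => hdisj (h ▸ ha) hc) (fun h => hdisj (h ▸ hb) hc)
  have hπ : (initPerm u₂).filter (pairPred a b) = [] :=
    List.filter_eq_nil_iff.2 fun c hc => by simp [hu₂ c (mem_initPerm.1 hc)]
  have hπtail : (initPerm u₂).tail.filter (pairPred a b) = [] :=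
    List.filter_eq_nil_iff.2 fun c hc => by
      simp [hu₂ c (mem_initPerm.1 (List.mem_of_mem_tail hc))]
  have hσ : (finalPerm u₁).dropLast ++ [x] = finalPerm u₁ :=
    List.dropLast_append_getLast? x (by rw [getLast?_finalPerm]; exact hx)
  have hA : (u₁.flatMap fun c => if c = x then x :: initPerm u₂ else [c]).filter (pairPred a b) =
      u₁.filter (pairPred a b) :=
    List.filter_flatMap_eq_filter fun c _ => by
      split_ifs with h
      · rw [h, ← List.singleton_append, List.filter_append, hπ, List.append_nil]
      · rfl
  have hU : (middleBlock u₁ u₂ x y).filter (pairPred a b) =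
      (finalPerm u₁).filter (pairPred a b) ++ (finalPerm u₁).filter (pairPred a b) := by
    nth_rewrite 2 [← hσ]
    simp only [middleBlock, List.filter_append, hπ, hπtail,
      List.filter_cons_of_neg (p := pairPred a b) (a := y) (by simp [hu₂ y hy]), List.append_nil,
      List.append_assoc]
  obtain ⟨m, hB⟩ : ∃ m,
      (u₂.flatMap fun c => if c = y then finalPerm u₁ ++ [y] else [c]).filter (pairPred a b) =
        (List.replicate m ((finalPerm u₁).filter (pairPred a b))).flatten :=
    List.exists_filter_flatMap_eq_flatten_replicate fun c hc => by
      split_ifs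
      · simp [hu₂ y hy]
      · simp [hu₂ c hc]
  rw [filter_connectWord, hA, hU, hB, List.flatten_replicate_append_self, ← finalPerm_filter,
    List.append_assoc, ← List.flatten_append, ← List.replicate_add,
    pattern11Count_append_prefix_flatten_replicate_finalPerm
      (List.mem_filter.2 ⟨ha, pairPred_left a b⟩) (List.mem_filter.2 ⟨hb, pairPred_right a b⟩) hab
      (List.prefix_refl _)]

theorem lt_pattern11Count_filter_connectWord_of_ne_left (hx : u₁.getLast? = some x)
    (hdisj : u₁.Disjoint u₂) (ha : a ∈ u₁) (hb : b ∈ u₂) (hax : a ≠ x) :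
    k < pattern11Count ((connectWord k u₁ u₂ x y).filter (pairPred a b)) := by
  have hbσ : b ∉ finalPerm u₁ := fun h => hdisj (mem_finalPerm.1 h) hb
  have haσ' : a ∈ (finalPerm u₁).dropLast := by
    have : a ∈ (finalPerm u₁).dropLast ++ [x] := by
      rw [List.dropLast_append_getLast? x (by rw [getLast?_finalPerm]; exact hx)]
      exact mem_finalPerm.2 ha
    simpa [hax] using this
  have hσ : (finalPerm u₁).filter (pairPred a b) = [a] :=
    (nodup_finalPerm u₁).filter_pairPred_eq_singleton (mem_finalPerm.2 ha) hbσ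
  have hσ' : (finalPerm u₁).dropLast.filter (pairPred a b) = [a] :=
    ((nodup_finalPerm u₁).sublist (List.dropLast_sublist _)).filter_pairPred_eq_singleton haσ'
      fun h => hbσ (List.mem_of_mem_dropLast h)
  have hU : 1 ≤ pattern11Count ((middleBlock u₁ u₂ x y).filter (pairPred a b)) := by
    refine le_trans (by simp) (pattern11Count_le_of_isInfix (s := [a, a]) ?_)
    simp only [middleBlock, List.filter_append, hσ, hσ']
    exact ⟨[], ([y, x] ++ (initPerm u₂).tail ++ initPerm u₂).filter (pairPred a b),
      by simp only [List.filter_append, List.nil_append, List.append_assoc]; rfl⟩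
  calc k < (k + 1) * pattern11Count ((middleBlock u₁ u₂ x y).filter (pairPred a b)) := by
        nlinarith
    _ ≤ pattern11Count
          (List.replicate (k + 1) ((middleBlock u₁ u₂ x y).filter (pairPred a b))).flatten :=
      mul_le_pattern11Count_flatten_replicate _ _
    _ ≤ pattern11Count ((connectWord k u₁ u₂ x y).filter (pairPred a b)) := by
      rw [filter_connectWord]
      exact pattern11Count_le_of_isInfix (List.infix_append _ _ _)

theorem pattern11Count_filter_connectWord_self (hx : u₁.getLast? = some x)
    (hy : u₂.head? = some y) (hdisj : u₁.Disjoint u₂) :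
    pattern11Count ((connectWord k u₁ u₂ x y).filter (pairPred x y)) = 0 := by
  have hxu₁ : x ∈ u₁ := List.mem_of_getLast? hx
  have hyu₂ : y ∈ u₂ := List.mem_of_head? hy
  have hxy : x ≠ y := fun h => hdisj hxu₁ (h ▸ hyu₂)
  have hσ : (finalPerm u₁).filter (pairPred x y) = [x] :=
    (nodup_finalPerm u₁).filter_pairPred_eq_singleton (mem_finalPerm.2 hxu₁)
      fun h => hdisj (mem_finalPerm.1 h) hyu₂
  have hπ : (initPerm u₂).filter (pairPred x y) = [y] := by
    rw [pairPred_comm]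
    exact (nodup_initPerm u₂).filter_pairPred_eq_singleton (mem_initPerm.2 hyu₂)
      fun h => hdisj hxu₁ (mem_initPerm.1 h)
  have hσ' : (finalPerm u₁).dropLast.filter (pairPred x y) = [] := by
    have := congrArg (List.filter (pairPred x y))
      (List.dropLast_append_getLast? x (by rw [getLast?_finalPerm]; exact hx))
    rw [List.filter_append, hσ, List.filter_singleton, pairPred_left, cond_true] at this
    exact List.append_left_eq_self.1 this
  have hπ' : (initPerm u₂).tail.filter (pairPred x y) = [] := by
    have := congrArg (List.filter (pairPred x y))
      (List.cons_head?_tail (by rw [head?_initPerm]; exact hy))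
    rw [List.filter_cons_of_pos (pairPred_right x y), hπ] at this
    exact List.cons_injective this
  obtain ⟨m₁, hA⟩ : ∃ m,
      (u₁.flatMap fun c => if c = x then x :: initPerm u₂ else [c]).filter (pairPred x y) =
        (List.replicate m [x, y]).flatten :=
    List.exists_filter_flatMap_eq_flatten_replicate fun c hc => by
      split_ifs with hcx
      · exact Or.inr (by rw [List.filter_cons_of_pos (pairPred_left x y), hπ])
      · exact Or.inl (by simp [pairPred_eq_false hcx fun h => hdisj hc (h ▸ hyu₂)])
  obtain ⟨m₂, hB⟩ : ∃ m,
      (u₂.flatMap fun c => if c = y then finalPerm u₁ ++ [y] else [c]).filter (pairPred x y) =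
        (List.replicate m [x, y]).flatten :=
    List.exists_filter_flatMap_eq_flatten_replicate fun c hc => by
      split_ifs with hcy
      · exact Or.inr (by simp [hσ])
      · exact Or.inl (by simp [pairPred_eq_false (fun h => hdisj (h ▸ hxu₁) hc) hcy])
  have hU : (middleBlock u₁ u₂ x y).filter (pairPred x y) = [x, y] ++ [x, y] := by
    simp [middleBlock, hσ, hσ', hπ, hπ']
  rw [filter_connectWord, hA, hU, hB, List.flatten_replicate_append_self, ← List.flatten_append,
    ← List.flatten_append, ← List.replicate_add, ← List.replicate_add, pattern11Count_eq_zero_iff]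
  exact List.isChain_flatten_replicate (List.isChain_pair.2 hxy) (by simp [hxy.symm]) _

theorem pattern11Count_filter_connectWord_of_mem_right (hx : x ∈ u₁) (hy : u₂.head? = some y)
    (hdisj : u₁.Disjoint u₂) (ha : a ∈ u₂) (hb : b ∈ u₂) (hab : a ≠ b) :
    pattern11Count ((connectWord k u₁ u₂ x y).filter (pairPred a b)) =
      pattern11Count (u₂.filter (pairPred a b)) := by
  rw [← pattern11Count_reverse, ← List.filter_reverse, connectWord_reverse,
    pattern11Count_filter_connectWord_of_mem_left (by rwa [List.getLast?_reverse])
      (List.mem_reverse.2 hx)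
      (List.disjoint_reverse_left.2 (List.disjoint_reverse_right.2 hdisj.symm))
      (List.mem_reverse.2 ha) (List.mem_reverse.2 hb) hab,
    List.filter_reverse, pattern11Count_reverse]

theorem lt_pattern11Count_filter_connectWord (hx : u₁.getLast? = some x) (hy : u₂.head? = some y)
    (hdisj : u₁.Disjoint u₂) (ha : a ∈ u₁) (hb : b ∈ u₂) (hab : ¬(a = x ∧ b = y)) :
    k < pattern11Count ((connectWord k u₁ u₂ x y).filter (pairPred a b)) := by
  by_cases hax : a = x
  · rw [pairPred_comm, ← pattern11Count_reverse, ← List.filter_reverse, connectWord_reverse]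
    exact lt_pattern11Count_filter_connectWord_of_ne_left (by rwa [List.getLast?_reverse])
      (List.disjoint_reverse_left.2 (List.disjoint_reverse_right.2 hdisj.symm))
      (List.mem_reverse.2 hb) (List.mem_reverse.2 ha) fun h => hab ⟨hax, h⟩
  · exact lt_pattern11Count_filter_connectWord_of_ne_left hx hdisj ha hb hax

end Connect

section Gluing

variable {V : Type*} [DecidableEq V] {G : SimpleGraph V} {k : ℕ}

theorem IsK11Rep.adj_iff_of_induce {s : Set V} {w : List s} (h : IsK11Rep (G.induce s) k w)
    {a b : V} (ha : a ∈ s) (hb : b ∈ s) (hab : a ≠ b) :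
    G.Adj a b ↔ pattern11Count ((w.map Subtype.val).filter (pairPred a b)) ≤ k := by
  show G.Adj (⟨a, ha⟩ : s).1 (⟨b, hb⟩ : s).1 ↔
    pattern11Count ((w.map Subtype.val).filter (pairPred (⟨a, ha⟩ : s).1 (⟨b, hb⟩ : s).1)) ≤ k
  rw [filter_pairPred_map Subtype.val_injective, pattern11Count_map Subtype.val_injective]
  exact h.adj_iff (a := ⟨a, ha⟩) (b := ⟨b, hb⟩) fun h => hab (congrArg Subtype.val h)

theorem IsK11Rep.mem_map_val_iff {s : Set V} {w : List s} (h : IsK11Rep (G.induce s) k w) {c : V} :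
    c ∈ w.map Subtype.val ↔ c ∈ s :=
  ⟨fun hc => by obtain ⟨d, -, rfl⟩ := List.mem_map.1 hc; exact d.2,
    fun hc => List.mem_map.2 ⟨⟨c, hc⟩, h.1 _, rfl⟩⟩

theorem isK11Rep_of_union {V₁ V₂ : Set V} (hunion : V₁ ∪ V₂ = Set.univ) {w : List V}
    (hmem : ∀ v, v ∈ w)
    (h₁ : ∀ a ∈ V₁, ∀ b ∈ V₁, a ≠ b → (G.Adj a b ↔ pattern11Count (w.filter (pairPred a b)) ≤ k))
    (h₂ : ∀ a ∈ V₂, ∀ b ∈ V₂, a ≠ b → (G.Adj a b ↔ pattern11Count (w.filter (pairPred a b)) ≤ k))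
    (h₁₂ : ∀ a ∈ V₁, ∀ b ∈ V₂, G.Adj a b ↔ pattern11Count (w.filter (pairPred a b)) ≤ k) :
    IsK11Rep G k w := by
  have hcover : ∀ v, v ∈ V₁ ∨ v ∈ V₂ := fun v => (Set.ext_iff.1 hunion v).2 (Set.mem_univ v)
  refine isK11Rep_iff.2 ⟨hmem, fun a b hab => ?_⟩
  rcases hcover a with ha | ha <;> rcases hcover b with hb | hb
  · exact h₁ a ha b hb hab
  · exact h₁₂ a ha b hb
  · rw [G.adj_comm, pairPred_comm]
    exact h₁₂ b hb a ha
  · exact h₂ a ha b hb hab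

end Gluing

theorem k11Representable_connect_edge_general {V : Type*} [DecidableEq V] (k : ℕ)
    (G : SimpleGraph V) (V₁ V₂ : Set V) (x y : V)
    (hunion : V₁ ∪ V₂ = Set.univ) (hdisj : Disjoint V₁ V₂)
    (hx : x ∈ V₁) (hy : y ∈ V₂) (hxy : G.Adj x y)
    (hsep : ∀ a ∈ V₁, ∀ b ∈ V₂, G.Adj a b → a = x ∧ b = y)
    (h1 : K11Representable (G.induce V₁) k) (h2 : K11Representable (G.induce V₂) k) :
    K11Representable G k := by
  obtain ⟨w₁, hw₁, hw₁x⟩ := h1.exists_getLast?_eq ⟨x, hx⟩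
  obtain ⟨w₂, hw₂, hw₂y⟩ := h2.exists_head?_eq ⟨y, hy⟩
  have hmem₁ := @hw₁.mem_map_val_iff
  have hmem₂ := @hw₂.mem_map_val_iff
  have hx₁ : (w₁.map Subtype.val).getLast? = some x := by rw [List.getLast?_map, hw₁x]; rfl
  have hy₂ : (w₂.map Subtype.val).head? = some y := by rw [List.head?_map, hw₂y]; rfl
  have hdisjw : (w₁.map Subtype.val).Disjoint (w₂.map Subtype.val) := fun c h₁ h₂ =>
    Set.disjoint_left.1 hdisj (hmem₁.1 h₁) (hmem₂.1 h₂)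
  refine ⟨connectWord k (w₁.map Subtype.val) (w₂.map Subtype.val) x y,
    isK11Rep_of_union hunion (fun v => mem_connectWord ?_) (fun a ha b hb hab => ?_)
      (fun a ha b hb hab => ?_) (fun a ha b hb => ?_)⟩
  · rcases (Set.ext_iff.1 hunion v).2 (Set.mem_univ v) with hv | hv
    exacts [Or.inl (hmem₁.2 hv), Or.inr (hmem₂.2 hv)]
  · rw [hw₁.adj_iff_of_induce ha hb hab, pattern11Count_filter_connectWord_of_mem_left hx₁
      (hmem₂.2 hy) hdisjw (hmem₁.2 ha) (hmem₁.2 hb) hab]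
  · rw [hw₂.adj_iff_of_induce ha hb hab, pattern11Count_filter_connectWord_of_mem_right
      (hmem₁.2 hx) hy₂ hdisjw (hmem₂.2 ha) (hmem₂.2 hb) hab]
  · by_cases hab : a = x ∧ b = y
    · obtain ⟨rfl, rfl⟩ := hab
      exact iff_of_true hxy (by rw [pattern11Count_filter_connectWord_self hx₁ hy₂ hdisjw]; omega)
    · exact iff_of_false (fun h => hab (hsep a ha b hb h)) (not_le.2
        (lt_pattern11Count_filter_connectWord hx₁ hy₂ hdisjw (hmem₁.2 ha) (hmem₂.2 hb) hab))

/-- connecting two `k`-11-representable graphs by a single edge yields a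
`k`-11-representable graph. -/
theorem k11Representable_connect_edge {V : Type*} [DecidableEq V] [Fintype V] (k : ℕ)
    (G : SimpleGraph V) (V₁ V₂ : Set V) (x y : V)
    (hunion : V₁ ∪ V₂ = Set.univ) (hdisj : Disjoint V₁ V₂)
    (hx : x ∈ V₁) (hy : y ∈ V₂) (hxy : G.Adj x y)
    (hsep : ∀ a ∈ V₁, ∀ b ∈ V₂, G.Adj a b → a = x ∧ b = y)
    (h1 : K11Representable (G.induce V₁) k) (h2 : K11Representable (G.induce V₂) k) :
    K11Representable G k :=
  k11Representable_connect_edge_general k G V₁ V₂ x y hunion hdisj hx hy hxy hsep h1 h2
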